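/- T_{abc} = 0 is equivalent to the condition ∇_bP_{ac} = (1/2p)(E_aP_{bc}+E_cP_{ab}) − (1/(2(n−p)))(W_aΠ_{bc}+W_cΠ_{ba}) on the Levi-Civita covariant derivative of P, which can be written as ∇_bP_{ac} = P_{bc}u_a + P_{ab}u_c − P_a^r u_r g_{bc} − P_c^r u_r g_{ab} with u_a = E_a/(2p) + W_a/(2(n−p)). -/

import Mathlib

open scoped BigOperators

noncomputable section

/-- Points of the local chart, modelled as `ℝⁿ`. -/
abbrev Pt (n : ℕ) := Fin n → ℝ
/-- Scalar fields. -/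
abbrev Sc (n : ℕ) := Pt n → ℝ
/-- Fields with one index. -/
abbrev Ten1 (n : ℕ) := Pt n → Fin n → ℝ
/-- Fields with two indices. -/
abbrev Ten2 (n : ℕ) := Pt n → Fin n → Fin n → ℝ
/-- Fields with three indices. -/
abbrev Ten3 (n : ℕ) := Pt n → Fin n → Fin n → Fin n → ℝ
/-- Fields with four indices. -/
abbrev Ten4 (n : ℕ) := Pt n → Fin n → Fin n → Fin n → Fin n → ℝ

variable {n : ℕ}

/-- Partial derivative `∂ᵢ f (x)`. -/
def pd (i : Fin n) (f : Sc n) (x : Pt n) : ℝ :=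
  fderiv ℝ f x (Pi.single i 1)

/-- Christoffel symbols `Γ^a_{bc}` of a metric `g` with inverse metric `ginv`. -/
def christoffel (g ginv : Ten2 n) : Ten3 n := fun x a b c =>
  (1/2) * ∑ e, ginv x a e *
    (pd b (fun y => g y c e) x + pd c (fun y => g y b e) x - pd e (fun y => g y b c) x)

/-- Covariant derivative `∇_a T_{bc}` for a connection with coefficients `Γ^r_{ab}`. -/
def cov2 (Γ : Ten3 n) (T : Ten2 n) : Ten3 n := fun x a b c =>
  pd a (fun y => T y b c) x - (∑ r, Γ x r a b * T x r c) - ∑ r, Γ x r a c * T x b r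

/-- Covariant derivative `∇_e T^{ab}`. -/
def cov20 (Γ : Ten3 n) (T : Ten2 n) : Ten3 n := fun x e a b =>
  pd e (fun y => T y a b) x + (∑ r, Γ x a e r * T x r b) + ∑ r, Γ x b e r * T x a r

/-- Covariant derivative `∇_e T^a_b` (first index of `T` contravariant). -/
def cov11 (Γ : Ten3 n) (T : Ten2 n) : Ten3 n := fun x e a b =>
  pd e (fun y => T y a b) x + (∑ r, Γ x a e r * T x r b) - ∑ r, Γ x r e b * T x a r

/-- Covariant derivative `∇_a ω_b` of a 1-form. -/
def cov1 (Γ : Ten3 n) (ω : Ten1 n) : Ten2 n := fun x a b =>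
  pd a (fun y => ω y b) x - ∑ r, Γ x r a b * ω x r

/-- Covariant derivative `∇_b ξ^a` of a vector field; result indexed as `x a b` = `∇_b ξ^a`. -/
def covVec (Γ : Ten3 n) (ξ : Ten1 n) : Ten2 n := fun x a b =>
  pd b (fun y => ξ y a) x + ∑ r, Γ x a b r * ξ x r

/-- Covariant derivative `∇_e L^a_{bc}` of a (1,2) tensor; result indexed `x e a b c`. -/
def cov12 (Γ : Ten3 n) (L : Ten3 n) : Ten4 n := fun x e a b c =>
  pd e (fun y => L y a b c) x + (∑ r, Γ x a e r * L x r b c)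
    - (∑ r, Γ x r e b * L x a r c) - ∑ r, Γ x r e c * L x a b r

/-- Curvature tensor `R^a_{bcd} = ∂_c Γ^a_{db} - ∂_d Γ^a_{cb} + Γ^a_{rc}Γ^r_{db} - Γ^a_{rd}Γ^r_{cb}`. -/
def riem (Γ : Ten3 n) : Ten4 n := fun x a b c d =>
  pd c (fun y => Γ y a d b) x - pd d (fun y => Γ y a c b) x
    + (∑ r, Γ x a r c * Γ x r d b) - ∑ r, Γ x a r d * Γ x r c b

/-- Action of a vector field on a scalar, `ξ(f)`. -/
def lieSc (ξ : Ten1 n) (f : Sc n) : Sc n := fun x => ∑ c, ξ x c * pd c f x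

/-- Lie derivative of a 1-form. -/
def lie1 (ξ : Ten1 n) (ω : Ten1 n) : Ten1 n := fun x a =>
  (∑ c, ξ x c * pd c (fun y => ω y a) x) + ∑ c, pd a (fun y => ξ y c) x * ω x c

/-- Lie derivative of a covariant 2-tensor `T_{ab}`. -/
def lie2 (ξ : Ten1 n) (T : Ten2 n) : Ten2 n := fun x a b =>
  (∑ c, ξ x c * pd c (fun y => T y a b) x)
    + (∑ c, pd a (fun y => ξ y c) x * T x c b)
    + ∑ c, pd b (fun y => ξ y c) x * T x a c

/-- Lie derivative of a contravariant 2-tensor `T^{ab}`. -/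
def lie20 (ξ : Ten1 n) (T : Ten2 n) : Ten2 n := fun x a b =>
  (∑ c, ξ x c * pd c (fun y => T y a b) x)
    - (∑ c, pd c (fun y => ξ y a) x * T x c b)
    - ∑ c, pd c (fun y => ξ y b) x * T x a c

/-- Lie derivative of a mixed tensor `T^a_b`. -/
def lie11 (ξ : Ten1 n) (T : Ten2 n) : Ten2 n := fun x a b =>
  (∑ c, ξ x c * pd c (fun y => T y a b) x)
    - (∑ c, pd c (fun y => ξ y a) x * T x c b)
    + ∑ c, pd b (fun y => ξ y c) x * T x a c

/-- Lie derivative of a covariant 3-tensor `T_{abc}`. -/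
def lie3 (ξ : Ten1 n) (T : Ten3 n) : Ten3 n := fun x a b c =>
  (∑ d, ξ x d * pd d (fun y => T y a b c) x)
    + (∑ d, pd a (fun y => ξ y d) x * T x d b c)
    + (∑ d, pd b (fun y => ξ y d) x * T x a d c)
    + ∑ d, pd c (fun y => ξ y d) x * T x a b d

/-- Lie derivative of a (1,2) tensor `T^a_{bc}`. -/
def lie12 (ξ : Ten1 n) (T : Ten3 n) : Ten3 n := fun x a b c =>
  (∑ d, ξ x d * pd d (fun y => T y a b c) x)
    - (∑ d, pd d (fun y => ξ y a) x * T x d b c)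
    + (∑ d, pd b (fun y => ξ y d) x * T x a d c)
    + ∑ d, pd c (fun y => ξ y d) x * T x a b d

/-- Lie derivative of connection coefficients `£_ξ Γ^a_{bc}` (standard coordinate formula,
equivalent to the derivative of the pullback of the connection by the flow of `ξ`). -/
def lieConn (ξ : Ten1 n) (Γ : Ten3 n) : Ten3 n := fun x a b c =>
  (∑ d, ξ x d * pd d (fun y => Γ y a b c) x)
    - (∑ d, pd d (fun y => ξ y a) x * Γ x d b c)
    + (∑ d, pd b (fun y => ξ y d) x * Γ x a d c)
    + (∑ d, pd c (fun y => ξ y d) x * Γ x a b d)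
    + pd b (fun y => pd c (fun z => ξ z a) y) x

/-- Lie bracket of vector fields. -/
def bracket (ξ η : Ten1 n) : Ten1 n := fun x a =>
  (∑ c, ξ x c * pd c (fun y => η y a) x) - ∑ c, η x c * pd c (fun y => ξ y a) x

/-- Index raising of the first index: `T^a_b = g^{ac} T_{cb}`. -/
def mixUp (ginv T : Ten2 n) : Ten2 n := fun x a b => ∑ c, ginv x a c * T x c b

/-- Raising both indices: `T^{ab} = g^{ac} g^{bd} T_{cd}`. -/
def up2 (ginv T : Ten2 n) : Ten2 n := fun x a b => ∑ c, ∑ d, ginv x a c * ginv x b d * T x c d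

/-- The tensor `M_{abc} = ∇_b P_{ac} + ∇_c P_{ab} - ∇_a P_{bc}` (Levi-Civita connection of `g`). -/
def Mtens (g ginv P : Ten2 n) : Ten3 n := fun x a b c =>
  cov2 (christoffel g ginv) P x b a c + cov2 (christoffel g ginv) P x c a b
    - cov2 (christoffel g ginv) P x a b c

/-- The 1-form `E_a = M_{acb} P^{cb}`. -/
def Eform (g ginv P : Ten2 n) : Ten1 n := fun x a =>
  ∑ c, ∑ b, Mtens g ginv P x a c b * up2 ginv P x c b

/-- The 1-form `W_a = -M_{acb} Π^{cb}`. -/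
def Wform (g ginv P Q : Ten2 n) : Ten1 n := fun x a =>
  - ∑ c, ∑ b, Mtens g ginv P x a c b * up2 ginv Q x c b

/-- The tensor `T_{abc} = M_{abc} + W_a Π_{bc}/(n-p) - E_a P_{bc}/p`. -/
def Ttens (p : ℝ) (g ginv P Q : Ten2 n) : Ten3 n := fun x a b c =>
  Mtens g ginv P x a b c + (1/((n : ℝ) - p)) * Wform g ginv P Q x a * Q x b c
    - (1/p) * Eform g ginv P x a * P x b c

/-- The difference tensor `L^a_{bc}` of the bi-conformal connection. -/
def Ltens (p : ℝ) (g ginv P Q : Ten2 n) : Ten3 n := fun x a b c =>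
  (1/(2*p)) * (Eform g ginv P x b * mixUp ginv P x a c
      + Eform g ginv P x c * mixUp ginv P x a b)
  + (1/(2*((n : ℝ) - p))) * (Wform g ginv P Q x b * mixUp ginv Q x a c
      + Wform g ginv P Q x c * mixUp ginv Q x a b)
  + (1/2) * ∑ r, (mixUp ginv P x a r - mixUp ginv Q x a r)
      * (∑ s, ginv x r s * Mtens g ginv P x s b c)

/-- The bi-conformal connection `Γ̄^a_{bc} = γ^a_{bc} + L^a_{bc}`. -/
def biconn (p : ℝ) (g ginv P Q : Ten2 n) : Ten3 n := fun x a b c =>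
  christoffel g ginv x a b c + Ltens p g ginv P Q x a b c

/-- The standing hypotheses: `g` a smooth pseudo-Riemannian metric with inverse `ginv`, and
`P`, `Q` smooth symmetric orthogonal complementary projectors with respect to `g`. -/
def ProjectorSetup (g ginv P Q : Ten2 n) : Prop :=
  (∀ a b, ContDiff ℝ (⊤ : ℕ∞) (fun x => g x a b)) ∧
  (∀ a b, ContDiff ℝ (⊤ : ℕ∞) (fun x => ginv x a b)) ∧
  (∀ a b, ContDiff ℝ (⊤ : ℕ∞) (fun x => P x a b)) ∧
  (∀ x a b, g x a b = g x b a) ∧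
  (∀ x a b, ginv x a b = ginv x b a) ∧
  (∀ x a b, P x a b = P x b a) ∧
  (∀ x a b, Q x a b = Q x b a) ∧
  (∀ x a b, (∑ c, g x a c * ginv x c b) = if a = b then (1:ℝ) else 0) ∧
  (∀ x a b, P x a b + Q x a b = g x a b) ∧
  (∀ x a b, (∑ c, P x a c * mixUp ginv P x c b) = P x a b) ∧
  (∀ x a b, (∑ c, Q x a c * mixUp ginv Q x c b) = Q x a b) ∧
  (∀ x a b, (∑ c, P x a c * mixUp ginv Q x c b) = 0)

open Matrix in
theorem aux_open_marker : True := trivial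

open Matrix

section AuxPD

variable {n : ℕ}

lemma pd_funext (i : Fin n) {f f' : Sc n} (hf : ∀ y, f y = f' y) (x : Pt n) :
    pd i f x = pd i f' x := by
  have : f = f' := funext hf
  rw [this]

lemma pd_const (i : Fin n) (c : ℝ) (x : Pt n) : pd i (fun _ => c) x = 0 := by
  simp [pd]

lemma pd_mul (i : Fin n) {f g : Sc n} {x : Pt n}
    (hf : DifferentiableAt ℝ f x) (hg : DifferentiableAt ℝ g x) :
    pd i (fun y => f y * g y) x = f x * pd i g x + g x * pd i f x := by
  simp [pd, fderiv_fun_mul hf hg]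

lemma pd_sum {ι : Type*} (i : Fin n) (s : Finset ι) (f : ι → Sc n) (x : Pt n)
    (hf : ∀ j ∈ s, DifferentiableAt ℝ (f j) x) :
    pd i (fun y => ∑ j ∈ s, f j y) x = ∑ j ∈ s, pd i (f j) x := by
  simp [pd, fderiv_fun_sum hf]

/-- matrix of a 2-tensor at a point -/
def TM (T : Ten2 n) (x : Pt n) : Matrix (Fin n) (Fin n) ℝ := Matrix.of fun a b => T x a b

/-- matrix of partial derivatives of a 2-tensor at a point -/
def dTM (T : Ten2 n) (e : Fin n) (x : Pt n) : Matrix (Fin n) (Fin n) ℝ :=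
  Matrix.of fun a b => pd e (fun y => T y a b) x

/-- Christoffel matrix `(Γ_c)_{s r} = Γ^s_{c r}` -/
def ΓM (g ginv : Ten2 n) (c : Fin n) (x : Pt n) : Matrix (Fin n) (Fin n) ℝ :=
  Matrix.of fun s r => christoffel g ginv x s c r

/-- Covariant derivative matrix `(D_c)_{ab} = ∇_c P_{ab}` -/
def DM (g ginv P : Ten2 n) (c : Fin n) (x : Pt n) : Matrix (Fin n) (Fin n) ℝ :=
  Matrix.of fun a b => cov2 (christoffel g ginv) P x c a b

lemma delta_sum (c : Fin n → ℝ) (b : Fin n) :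
    (∑ t, (if b = t then (1:ℝ) else 0) * c t) = c b := by
  simp [ite_mul, Finset.sum_ite_eq]

lemma delta_sum' (c : Fin n → ℝ) (b : Fin n) :
    (∑ t, c t * (if t = b then (1:ℝ) else 0)) = c b := by
  simp [mul_ite, Finset.sum_ite_eq']

end AuxPD

section AuxProj

variable {n : ℕ} (g ginv P Q : Ten2 n) (x : Pt n)

lemma TM_mul_apply (A B : Ten2 n) (a b : Fin n) :
    (TM A x * TM B x) a b = ∑ c, A x a c * B x c b := by
  simp [TM, Matrix.mul_apply]

variable (h : ProjectorSetup g ginv P Q)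
include h

lemma gG_one : TM g x * TM ginv x = 1 := by
  obtain ⟨_, _, _, _, _, _, _, hgG, _⟩ := h
  ext a b
  rw [TM_mul_apply, hgG x a b, Matrix.one_apply]

lemma Gg_one : TM ginv x * TM g x = 1 := by
  obtain ⟨_, _, _, hgs, hGs, _, _, hgG, _⟩ := h
  ext a b
  rw [TM_mul_apply, Matrix.one_apply]
  have : ∀ c, ginv x a c * g x c b = g x b c * ginv x c a := by
    intro c; rw [hgs x c b, hGs x a c]; ring
  rw [Finset.sum_congr rfl fun c _ => this c, hgG x b a]
  by_cases hab : a = b <;> simp [hab, eq_comm]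

lemma Pm_symm : (TM P x)ᵀ = TM P x := by
  obtain ⟨_, _, _, _, _, hPs, _⟩ := h
  ext a b; exact hPs x b a

lemma Qm_symm : (TM Q x)ᵀ = TM Q x := by
  obtain ⟨_, _, _, _, _, _, hQs, _⟩ := h
  ext a b; exact hQs x b a

lemma gm_symm : (TM g x)ᵀ = TM g x := by
  obtain ⟨_, _, _, hgs, _⟩ := h
  ext a b; exact hgs x b a

lemma Gm_symm : (TM ginv x)ᵀ = TM ginv x := by
  obtain ⟨_, _, _, _, hGs, _⟩ := h
  ext a b; exact hGs x b a

lemma PQ_g : TM P x + TM Q x = TM g x := by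
  obtain ⟨_, _, _, _, _, _, _, _, hPQ, _⟩ := h
  ext a b; exact hPQ x a b

omit h in
lemma mixUp_eq (a b : Fin n) : mixUp ginv P x a b = (TM ginv x * TM P x) a b := by
  simp [mixUp, TM, Matrix.mul_apply]

lemma PGP : TM P x * TM ginv x * TM P x = TM P x := by
  obtain ⟨_, _, _, _, _, _, _, _, _, hPGP, _⟩ := h
  rw [mul_assoc]
  ext a b
  have : (TM P x * (TM ginv x * TM P x)) a b = ∑ c, P x a c * mixUp ginv P x c b := by
    rw [Matrix.mul_apply]
    exact Finset.sum_congr rfl fun c _ => by rw [mixUp_eq ginv P x]; rfl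
  rw [this, hPGP x a b]; rfl

lemma QGQ : TM Q x * TM ginv x * TM Q x = TM Q x := by
  obtain ⟨_, _, _, _, _, _, _, _, _, _, hQGQ, _⟩ := h
  rw [mul_assoc]
  ext a b
  have : (TM Q x * (TM ginv x * TM Q x)) a b = ∑ c, Q x a c * mixUp ginv Q x c b := by
    rw [Matrix.mul_apply]
    exact Finset.sum_congr rfl fun c _ => by rw [mixUp_eq ginv Q x]; rfl
  rw [this, hQGQ x a b]; rfl

lemma PGQ : TM P x * TM ginv x * TM Q x = 0 := by
  obtain ⟨_, _, _, _, _, _, _, _, _, _, _, hPGQ⟩ := h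
  rw [mul_assoc]
  ext a b
  have : (TM P x * (TM ginv x * TM Q x)) a b = ∑ c, P x a c * mixUp ginv Q x c b := by
    rw [Matrix.mul_apply]
    exact Finset.sum_congr rfl fun c _ => by rw [mixUp_eq ginv Q x]; rfl
  rw [this, hPGQ x a b]; rfl

lemma QGP : TM Q x * TM ginv x * TM P x = 0 := by
  have h1 := PGQ g ginv P Q x h
  have := congrArg Matrix.transpose h1
  rwa [Matrix.transpose_zero, Matrix.transpose_mul, Matrix.transpose_mul,
    Pm_symm g ginv P Q x h, Qm_symm g ginv P Q x h, Gm_symm g ginv P Q x h,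
    ← mul_assoc] at this

end AuxProj

section AuxDeriv

variable {n : ℕ} (g ginv P Q : Ten2 n) (x : Pt n) (h : ProjectorSetup g ginv P Q)
include h

lemma diff_g (a b : Fin n) : DifferentiableAt ℝ (fun y => g y a b) x :=
  (h.1 a b).differentiable (by simp) x

lemma diff_G (a b : Fin n) : DifferentiableAt ℝ (fun y => ginv y a b) x :=
  (h.2.1 a b).differentiable (by simp) x

lemma diff_P (a b : Fin n) : DifferentiableAt ℝ (fun y => P y a b) x :=
  (h.2.2.1 a b).differentiable (by simp) x

lemma nabla_g (e : Fin n) :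
    dTM g e x = (ΓM g ginv e x)ᵀ * TM g x + TM g x * ΓM g ginv e x := by
  obtain ⟨hgc, hGc, hPc, hgs, hGs, hPs, hQs, hgG, hPQ, hPGP, hQGQ, hPGQ⟩ := h
  have hδ : ∀ b t, (∑ s, g x s b * ginv x s t) = if b = t then (1:ℝ) else 0 := by
    intro b t
    rw [← hgG x b t]
    exact Finset.sum_congr rfl fun s _ => by rw [hgs x s b]
  have key : ∀ a b, (∑ s, g x s b * christoffel g ginv x s e a)
      = (1/2) * (pd e (fun y => g y a b) x + pd a (fun y => g y e b) x
          - pd b (fun y => g y e a) x) := by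
    intro a b
    simp only [christoffel]
    set A : Fin n → ℝ := fun t => pd e (fun y => g y a t) x + pd a (fun y => g y e t) x
        - pd t (fun y => g y e a) x with hA
    calc (∑ s, g x s b * (1/2 * ∑ t, ginv x s t * A t))
        = ∑ s, ∑ t, (g x s b * ginv x s t) * (1/2 * A t) := by
          refine Finset.sum_congr rfl fun s _ => ?_
          rw [Finset.mul_sum, Finset.mul_sum]
          exact Finset.sum_congr rfl fun t _ => by ring
      _ = ∑ t, ∑ s, (g x s b * ginv x s t) * (1/2 * A t) := Finset.sum_comm
      _ = ∑ t, (∑ s, g x s b * ginv x s t) * (1/2 * A t) := by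
          exact Finset.sum_congr rfl fun t _ => by rw [Finset.sum_mul]
      _ = ∑ t, (if b = t then (1:ℝ) else 0) * (1/2 * A t) := by
          exact Finset.sum_congr rfl fun t _ => by rw [hδ b t]
      _ = 1/2 * A b := delta_sum _ b
  ext a b
  have lhs : dTM g e x a b = pd e (fun y => g y a b) x := rfl
  have r1 : ((ΓM g ginv e x)ᵀ * TM g x) a b = ∑ s, g x s b * christoffel g ginv x s e a := by
    rw [Matrix.mul_apply]
    exact Finset.sum_congr rfl fun s _ => by
      simp [ΓM, TM, Matrix.transpose_apply, mul_comm]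
  have r2 : (TM g x * ΓM g ginv e x) a b = ∑ s, g x s a * christoffel g ginv x s e b := by
    rw [Matrix.mul_apply]
    exact Finset.sum_congr rfl fun s _ => by
      simp only [ΓM, TM, Matrix.of_apply]; rw [hgs x a s]
  have hba : pd e (fun y => g y b a) x = pd e (fun y => g y a b) x :=
    pd_funext e (fun y => hgs y b a) x
  rw [Matrix.add_apply, lhs, r1, r2, key a b, key b a, hba]
  ring

lemma d_gG_mat (e : Fin n) :
    dTM g e x * TM ginv x + TM g x * dTM ginv e x = 0 := by
  obtain ⟨hgc, hGc, hPc, hgs, hGs, hPs, hQs, hgG, hPQ, hPGP, hQGQ, hPGQ⟩ := h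
  ext a b
  have h0 : pd e (fun y => ∑ c, g y a c * ginv y c b) x = 0 := by
    rw [pd_funext e (fun y => hgG y a b) x, pd_const]
  have h1 : pd e (fun y => ∑ c, g y a c * ginv y c b) x
      = ∑ c, (g x a c * pd e (fun y => ginv y c b) x
          + ginv x c b * pd e (fun y => g y a c) x) := by
    rw [pd_sum e Finset.univ (fun c => fun y => g y a c * ginv y c b) x
      (fun c _ => ((hgc a c).differentiable (by simp) x).mul ((hGc c b).differentiable (by simp) x))]
    exact Finset.sum_congr rfl fun c _ =>
      pd_mul e ((hgc a c).differentiable (by simp) x) ((hGc c b).differentiable (by simp) x)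
  have h2 : (∑ c, (g x a c * pd e (fun y => ginv y c b) x
      + ginv x c b * pd e (fun y => g y a c) x)) = 0 := by rw [← h1, h0]
  have expand : (dTM g e x * TM ginv x + TM g x * dTM ginv e x) a b
      = ∑ c, (g x a c * pd e (fun y => ginv y c b) x
          + ginv x c b * pd e (fun y => g y a c) x) := by
    rw [Matrix.add_apply, Matrix.mul_apply, Matrix.mul_apply, ← Finset.sum_add_distrib]
    exact Finset.sum_congr rfl fun c _ => by simp [dTM, TM]; ring
  rw [expand, h2]; rfl

lemma dG_eq (e : Fin n) :
    dTM ginv e x = -(TM ginv x * (ΓM g ginv e x)ᵀ + ΓM g ginv e x * TM ginv x) := by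
  have h2 : TM g x * dTM ginv e x = -(dTM g e x * TM ginv x) :=
    eq_neg_of_add_eq_zero_left (by rw [add_comm]; exact d_gG_mat g ginv P Q x h e)
  have h3 : dTM ginv e x = -(TM ginv x * (dTM g e x * TM ginv x)) := by
    calc dTM ginv e x = (TM ginv x * TM g x) * dTM ginv e x := by
          rw [Gg_one g ginv P Q x h, one_mul]
      _ = TM ginv x * (TM g x * dTM ginv e x) := mul_assoc _ _ _
      _ = -(TM ginv x * (dTM g e x * TM ginv x)) := by rw [h2, mul_neg]
  rw [h3, nabla_g g ginv P Q x h e]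
  congr 1
  rw [add_mul, mul_add]
  congr 1
  · -- Gm * ((Γᵀ * gm) * Gm) = Gm * Γᵀ
    rw [mul_assoc ((ΓM g ginv e x)ᵀ) (TM g x) (TM ginv x), gG_one g ginv P Q x h, mul_one]
  · -- Gm * ((gm * Γ) * Gm) = Γ * Gm
    rw [← mul_assoc (TM ginv x) (TM g x * ΓM g ginv e x) (TM ginv x),
      ← mul_assoc (TM ginv x) (TM g x) (ΓM g ginv e x), Gg_one g ginv P Q x h, one_mul]

omit h in
lemma DM_eq (c : Fin n) :
    DM g ginv P c x
      = dTM P c x - (ΓM g ginv c x)ᵀ * TM P x - TM P x * ΓM g ginv c x := by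
  ext a b
  have r1 : ((ΓM g ginv c x)ᵀ * TM P x) a b = ∑ r, christoffel g ginv x r c a * P x r b := by
    rw [Matrix.mul_apply]
    exact Finset.sum_congr rfl fun r _ => by simp [ΓM, TM, Matrix.transpose_apply]
  have r2 : (TM P x * ΓM g ginv c x) a b = ∑ r, christoffel g ginv x r c b * P x a r := by
    rw [Matrix.mul_apply]
    exact Finset.sum_congr rfl fun r _ => by simp [ΓM, TM]; ring
  simp only [Matrix.sub_apply, r1, r2]
  rfl

lemma d_PGP_mat (e : Fin n) :
    TM P x * (TM ginv x * dTM P e x) + TM P x * (dTM ginv e x * TM P x)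
      + dTM P e x * (TM ginv x * TM P x) = dTM P e x := by
  obtain ⟨hgc, hGc, hPc, hgs, hGs, hPs, hQs, hgG, hPQ, hPGP, hQGQ, hPGQ⟩ := h
  ext a b
  have diffmix : ∀ c, DifferentiableAt ℝ (fun y => ∑ d, ginv y c d * P y d b) x :=
    fun c => DifferentiableAt.fun_sum fun d _ =>
      ((hGc c d).differentiable (by simp) x).mul ((hPc d b).differentiable (by simp) x)
  have h0 : pd e (fun y => ∑ c, P y a c * (∑ d, ginv y c d * P y d b)) x
      = pd e (fun y => P y a b) x := by
    refine pd_funext e (fun y => ?_) x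
    rw [← hPGP y a b]
    exact Finset.sum_congr rfl fun c _ => by rw [mixUp]
  have h1 : pd e (fun y => ∑ c, P y a c * (∑ d, ginv y c d * P y d b)) x
      = ∑ c, (P x a c * (∑ d, (ginv x c d * pd e (fun y => P y d b) x
            + P x d b * pd e (fun y => ginv y c d) x))
          + (∑ d, ginv x c d * P x d b) * pd e (fun y => P y a c) x) := by
    rw [pd_sum e Finset.univ (fun c => fun y => P y a c * (∑ d, ginv y c d * P y d b)) x
      (fun c _ => ((hPc a c).differentiable (by simp) x).mul (diffmix c))]
    refine Finset.sum_congr rfl fun c _ => ?_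
    rw [pd_mul e ((hPc a c).differentiable (by simp) x) (diffmix c)]
    congr 1
    congr 1
    rw [pd_sum e Finset.univ (fun d => fun y => ginv y c d * P y d b) x
      (fun d _ => ((hGc c d).differentiable (by simp) x).mul ((hPc d b).differentiable (by simp) x))]
    exact Finset.sum_congr rfl fun d _ =>
      pd_mul e ((hGc c d).differentiable (by simp) x) ((hPc d b).differentiable (by simp) x)
  have expand : (TM P x * (TM ginv x * dTM P e x) + TM P x * (dTM ginv e x * TM P x)
        + dTM P e x * (TM ginv x * TM P x)) a b
      = ∑ c, (P x a c * (∑ d, (ginv x c d * pd e (fun y => P y d b) x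
            + P x d b * pd e (fun y => ginv y c d) x))
          + (∑ d, ginv x c d * P x d b) * pd e (fun y => P y a c) x) := by
    simp only [Matrix.add_apply, Matrix.mul_apply, ← Finset.sum_add_distrib]
    refine Finset.sum_congr rfl fun c _ => ?_
    simp only [TM, dTM, Matrix.of_apply, Finset.mul_sum, Finset.sum_mul]
    rw [← Finset.sum_add_distrib, ← Finset.sum_add_distrib, ← Finset.sum_add_distrib]
    exact Finset.sum_congr rfl fun i _ => by ring
  rw [expand, ← h1, h0]; rfl

lemma d_tr_mat (p : ℕ) (htr : ∀ y, (∑ a, mixUp ginv P y a a) = (p : ℝ)) (e : Fin n) :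
    Matrix.trace (TM ginv x * dTM P e x) + Matrix.trace (dTM ginv e x * TM P x) = 0 := by
  obtain ⟨hgc, hGc, hPc, hgs, hGs, hPs, hQs, hgG, hPQ, hPGP, hQGQ, hPGQ⟩ := h
  have hconst : ∀ y, (∑ a, ∑ c, ginv y a c * P y c a) = ((p : ℕ) : ℝ) := by
    intro y
    rw [← htr y]
    exact Finset.sum_congr rfl fun a _ => rfl
  have h0 : pd e (fun y => ∑ a, ∑ c, ginv y a c * P y c a) x = 0 := by
    rw [show (fun y => ∑ a, ∑ c, ginv y a c * P y c a) = (fun _ : Pt n => ((p : ℕ) : ℝ))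
      from funext hconst]
    exact pd_const e _ x
  have h1 : pd e (fun y => ∑ a, ∑ c, ginv y a c * P y c a) x
      = ∑ a, ∑ c, (ginv x a c * pd e (fun y => P y c a) x
          + P x c a * pd e (fun y => ginv y a c) x) := by
    rw [pd_sum e Finset.univ (fun a => fun y => ∑ c, ginv y a c * P y c a) x
      (fun a _ => DifferentiableAt.fun_sum fun c _ =>
        ((hGc a c).differentiable (by simp) x).mul ((hPc c a).differentiable (by simp) x))]
    refine Finset.sum_congr rfl fun a _ => ?_
    rw [pd_sum e Finset.univ (fun c => fun y => ginv y a c * P y c a) x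
      (fun c _ => ((hGc a c).differentiable (by simp) x).mul ((hPc c a).differentiable (by simp) x))]
    exact Finset.sum_congr rfl fun c _ =>
      pd_mul e ((hGc a c).differentiable (by simp) x) ((hPc c a).differentiable (by simp) x)
  have expand : Matrix.trace (TM ginv x * dTM P e x) + Matrix.trace (dTM ginv e x * TM P x)
      = ∑ a, ∑ c, (ginv x a c * pd e (fun y => P y c a) x
          + P x c a * pd e (fun y => ginv y a c) x) := by
    simp only [Matrix.trace, Matrix.diag, Matrix.mul_apply, ← Finset.sum_add_distrib]
    refine Finset.sum_congr rfl fun a _ => Finset.sum_congr rfl fun c _ => ?_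
    simp only [TM, dTM, Matrix.of_apply]; ring
  rw [expand, ← h1, h0]

end AuxDeriv

section RingHelpers

variable {R : Type*} [Ring R]

lemma ring_h1 (Pm Gm Γ Γt dP dG D : R)
    (hPGP : Pm * Gm * Pm = Pm)
    (hD : D = dP - Γt * Pm - Pm * Γ)
    (hdG : dG = -(Gm * Γt + Γ * Gm))
    (hd11 : Pm * (Gm * dP) + Pm * (dG * Pm) + dP * (Gm * Pm) = dP) :
    Pm * Gm * D + D * (Gm * Pm) = D := by
  subst hD hdG
  have expand :
      Pm * Gm * (dP - Γt * Pm - Pm * Γ) + (dP - Γt * Pm - Pm * Γ) * (Gm * Pm)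
        = (Pm * (Gm * dP) + Pm * (-(Gm * Γt + Γ * Gm) * Pm) + dP * (Gm * Pm))
          - (Pm * Gm * Pm) * Γ - Γt * (Pm * Gm * Pm) := by noncomm_ring
  rw [expand, hd11, hPGP]
  noncomm_ring

lemma ring_h2 (Pm Qm gm Gm D : R) (hq : Qm = gm - Pm)
    (h1 : gm * Gm = 1) (h2 : Gm * gm = 1)
    (hP : Pm * Gm * D + D * (Gm * Pm) = D) :
    Qm * Gm * D + D * (Gm * Qm) = D := by
  subst hq
  have e : (gm - Pm) * Gm * D + D * (Gm * (gm - Pm))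
      = gm * Gm * D + D * (Gm * gm) - (Pm * Gm * D + D * (Gm * Pm)) := by noncomm_ring
  rw [e, h1, h2, hP, one_mul, mul_one]
  noncomm_ring

lemma ring_h3 (Pm Gm D X : R)
    (hPGP : Pm * Gm * Pm = Pm)
    (hX : Gm * Pm * X = X)
    (hD : Pm * Gm * D + D * (Gm * Pm) = D) :
    Pm * Gm * D * X = 0 := by
  have step : Pm * Gm * D * X = Pm * Gm * (Pm * Gm * D + D * (Gm * Pm)) * X := by rw [hD]
  have e2 : Pm * Gm * (Pm * Gm * D + D * (Gm * Pm)) * X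
      = (Pm * Gm * Pm) * (Gm * (D * X)) + (Pm * Gm * D) * (Gm * Pm * X) := by noncomm_ring
  rw [e2, hPGP, hX] at step
  -- step : Pm*Gm*D*X = Pm*(Gm*(D*X)) + Pm*Gm*D*X
  have h0 : Pm * (Gm * (D * X)) = 0 := right_eq_add.mp step
  calc Pm * Gm * D * X = Pm * (Gm * (D * X)) := by noncomm_ring
    _ = 0 := h0

end RingHelpers

section TraceHelpers

lemma trace_h1 {n : ℕ} (Pm Gm D X : Matrix (Fin n) (Fin n) ℝ)
    (hX1 : Gm * Pm * X = X) (hX2 : X * (Pm * Gm) = X)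
    (hD : Pm * Gm * D + D * (Gm * Pm) = D) :
    Matrix.trace (D * X) = 0 := by
  have e1 : Matrix.trace (D * X) = Matrix.trace ((Pm * Gm * D + D * (Gm * Pm)) * X) := by
    rw [hD]
  have e2 : (Pm * Gm * D + D * (Gm * Pm)) * X = (Pm * Gm) * (D * X) + D * (Gm * Pm * X) := by
    noncomm_ring
  rw [e2, Matrix.trace_add, Matrix.trace_mul_comm (Pm * Gm) (D * X), hX1] at e1
  have e3 : D * X * (Pm * Gm) = D * X := by rw [mul_assoc, hX2]
  rw [e3] at e1
  exact right_eq_add.mp e1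

lemma trace_h2 {n : ℕ} (Pm Gm Γ Γt dP dG D : Matrix (Fin n) (Fin n) ℝ)
    (hD : D = dP - Γt * Pm - Pm * Γ)
    (hdG : dG = -(Gm * Γt + Γ * Gm))
    (dtr : Matrix.trace (Gm * dP) + Matrix.trace (dG * Pm) = 0) :
    Matrix.trace (D * Gm) = 0 := by
  have h1 : D * Gm = dP * Gm - Γt * (Pm * Gm) - Pm * (Γ * Gm) := by rw [hD]; noncomm_ring
  have h2 : dG * Pm = -((Gm * Γt) * Pm + (Γ * Gm) * Pm) := by rw [hdG]; noncomm_ring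
  rw [h2, Matrix.trace_neg, Matrix.trace_add] at dtr
  have e1 : Matrix.trace (Γt * (Pm * Gm)) = Matrix.trace ((Gm * Γt) * Pm) := by
    rw [Matrix.trace_mul_comm Γt (Pm * Gm), mul_assoc, Matrix.trace_mul_comm Pm (Gm * Γt)]
  have e2 : Matrix.trace (Pm * (Γ * Gm)) = Matrix.trace ((Γ * Gm) * Pm) :=
    Matrix.trace_mul_comm _ _
  have e3 : Matrix.trace (dP * Gm) = Matrix.trace (Gm * dP) := Matrix.trace_mul_comm _ _
  rw [h1, Matrix.trace_sub, Matrix.trace_sub, e1, e2, e3]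
  linarith

end TraceHelpers

section AuxKey

variable {n : ℕ} (g ginv P Q : Ten2 n) (x : Pt n) (h : ProjectorSetup g ginv P Q)
include h

/-- `P^a_b G D_c + D_c G P = D_c` -/
lemma key_PGD (c : Fin n) :
    TM P x * TM ginv x * DM g ginv P c x
      + DM g ginv P c x * (TM ginv x * TM P x) = DM g ginv P c x :=
  ring_h1 (TM P x) (TM ginv x) (ΓM g ginv c x) (ΓM g ginv c x)ᵀ
    (dTM P c x) (dTM ginv c x) (DM g ginv P c x)
    (PGP g ginv P Q x h) (DM_eq g ginv P x c) (dG_eq g ginv P Q x h c)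
    (d_PGP_mat g ginv P Q x h c)

lemma key_QGD (c : Fin n) :
    TM Q x * TM ginv x * DM g ginv P c x
      + DM g ginv P c x * (TM ginv x * TM Q x) = DM g ginv P c x :=
  ring_h2 (TM P x) (TM Q x) (TM g x) (TM ginv x) (DM g ginv P c x)
    (by rw [← PQ_g g ginv P Q x h]; abel)
    (gG_one g ginv P Q x h) (Gg_one g ginv P Q x h) (key_PGD g ginv P Q x h c)

lemma X_absorb_left : TM ginv x * TM P x * (TM ginv x * TM P x * TM ginv x)
    = TM ginv x * TM P x * TM ginv x := by
  calc TM ginv x * TM P x * (TM ginv x * TM P x * TM ginv x)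
      = TM ginv x * ((TM P x * TM ginv x * TM P x) * TM ginv x) := by noncomm_ring
    _ = TM ginv x * (TM P x * TM ginv x) := by rw [PGP g ginv P Q x h]
    _ = TM ginv x * TM P x * TM ginv x := by noncomm_ring

lemma X_absorb_right : (TM ginv x * TM P x * TM ginv x) * (TM P x * TM ginv x)
    = TM ginv x * TM P x * TM ginv x := by
  calc (TM ginv x * TM P x * TM ginv x) * (TM P x * TM ginv x)
      = TM ginv x * ((TM P x * TM ginv x * TM P x) * TM ginv x) := by noncomm_ring
    _ = TM ginv x * (TM P x * TM ginv x) := by rw [PGP g ginv P Q x h]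
    _ = TM ginv x * TM P x * TM ginv x := by noncomm_ring

lemma Y_absorb_left : TM ginv x * TM Q x * (TM ginv x * TM Q x * TM ginv x)
    = TM ginv x * TM Q x * TM ginv x := by
  calc TM ginv x * TM Q x * (TM ginv x * TM Q x * TM ginv x)
      = TM ginv x * ((TM Q x * TM ginv x * TM Q x) * TM ginv x) := by noncomm_ring
    _ = TM ginv x * (TM Q x * TM ginv x) := by rw [QGQ g ginv P Q x h]
    _ = TM ginv x * TM Q x * TM ginv x := by noncomm_ring

lemma Y_absorb_right : (TM ginv x * TM Q x * TM ginv x) * (TM Q x * TM ginv x)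
    = TM ginv x * TM Q x * TM ginv x := by
  calc (TM ginv x * TM Q x * TM ginv x) * (TM Q x * TM ginv x)
      = TM ginv x * ((TM Q x * TM ginv x * TM Q x) * TM ginv x) := by noncomm_ring
    _ = TM ginv x * (TM Q x * TM ginv x) := by rw [QGQ g ginv P Q x h]
    _ = TM ginv x * TM Q x * TM ginv x := by noncomm_ring

/-- `P G D_c X = 0` where `X = G P G` -/
lemma key_PGDX (c : Fin n) :
    TM P x * TM ginv x * DM g ginv P c x * (TM ginv x * TM P x * TM ginv x) = 0 :=
  ring_h3 _ _ _ _ (PGP g ginv P Q x h) (X_absorb_left g ginv P Q x h)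
    (key_PGD g ginv P Q x h c)

/-- `Q G D_c Y = 0` where `Y = G Q G` -/
lemma key_QGDY (c : Fin n) :
    TM Q x * TM ginv x * DM g ginv P c x * (TM ginv x * TM Q x * TM ginv x) = 0 :=
  ring_h3 _ _ _ _ (QGQ g ginv P Q x h) (Y_absorb_left g ginv P Q x h)
    (key_QGD g ginv P Q x h c)

/-- `trace(D_a X) = 0` -/
lemma key_trDX (a : Fin n) :
    Matrix.trace (DM g ginv P a x * (TM ginv x * TM P x * TM ginv x)) = 0 :=
  trace_h1 (TM P x) (TM ginv x) _ _ (X_absorb_left g ginv P Q x h)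
    (X_absorb_right g ginv P Q x h) (key_PGD g ginv P Q x h a)

lemma key_trDG (a : Fin n) (p : ℕ) (htr : ∀ y, (∑ b, mixUp ginv P y b b) = (p : ℝ)) :
    Matrix.trace (DM g ginv P a x * TM ginv x) = 0 :=
  trace_h2 (TM P x) (TM ginv x) (ΓM g ginv a x) (ΓM g ginv a x)ᵀ
    (dTM P a x) (dTM ginv a x) _
    (DM_eq g ginv P x a) (dG_eq g ginv P Q x h a) (d_tr_mat g ginv P Q x h p htr a)

/-- `trace(D_a Y) = 0`  where `Y = G Q G = G - X` -/
lemma key_trDY (a : Fin n) (p : ℕ) (htr : ∀ y, (∑ b, mixUp ginv P y b b) = (p : ℝ)) :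
    Matrix.trace (DM g ginv P a x * (TM ginv x * TM Q x * TM ginv x)) = 0 := by
  have hY : TM ginv x * TM Q x * TM ginv x
      = TM ginv x - TM ginv x * TM P x * TM ginv x := by
    have hq : TM Q x = TM g x - TM P x := by rw [← PQ_g g ginv P Q x h]; abel
    rw [hq]
    have e : TM ginv x * (TM g x - TM P x) * TM ginv x
        = (TM ginv x * TM g x) * TM ginv x - TM ginv x * TM P x * TM ginv x := by noncomm_ring
    rw [e, Gg_one g ginv P Q x h, one_mul]
  rw [hY, mul_sub, Matrix.trace_sub, key_trDG g ginv P Q x h a p htr,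
    key_trDX g ginv P Q x h a]
  ring

end AuxKey

section AuxEW

variable {n : ℕ} (g ginv P Q : Ten2 n) (x : Pt n) (h : ProjectorSetup g ginv P Q)
include h

lemma up2_eq (T : Ten2 n) (a b : Fin n) :
    up2 ginv T x a b = (TM ginv x * TM T x * TM ginv x) a b := by
  obtain ⟨_, _, _, _, hGs, _⟩ := h
  rw [mul_assoc, Matrix.mul_apply]
  unfold up2
  refine Finset.sum_congr rfl fun c _ => ?_
  rw [Matrix.mul_apply, Finset.mul_sum]
  refine Finset.sum_congr rfl fun d _ => ?_
  simp only [TM, Matrix.of_apply]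
  rw [hGs x b d]; ring

lemma X_symm_entry (c b : Fin n) :
    (TM ginv x * TM P x * TM ginv x) b c = (TM ginv x * TM P x * TM ginv x) c b := by
  have hs : (TM ginv x * TM P x * TM ginv x)ᵀ = TM ginv x * TM P x * TM ginv x := by
    rw [Matrix.transpose_mul, Matrix.transpose_mul, Gm_symm g ginv P Q x h,
      Pm_symm g ginv P Q x h]
    noncomm_ring
  conv_lhs => rw [← hs]
  simp [Matrix.transpose_apply]

lemma Y_symm_entry (c b : Fin n) :
    (TM ginv x * TM Q x * TM ginv x) b c = (TM ginv x * TM Q x * TM ginv x) c b := by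
  have hs : (TM ginv x * TM Q x * TM ginv x)ᵀ = TM ginv x * TM Q x * TM ginv x := by
    rw [Matrix.transpose_mul, Matrix.transpose_mul, Gm_symm g ginv P Q x h,
      Qm_symm g ginv P Q x h]
    noncomm_ring
  conv_lhs => rw [← hs]
  simp [Matrix.transpose_apply]

lemma E_eq (a : Fin n) :
    Eform g ginv P x a
      = 2 * ∑ c, (DM g ginv P c x * (TM ginv x * TM P x * TM ginv x)) a c := by
  set XM := TM ginv x * TM P x * TM ginv x with hXM
  have step1 : Eform g ginv P x a
      = ∑ c, ∑ b, (cov2 (christoffel g ginv) P x c a b * XM c b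
          + cov2 (christoffel g ginv) P x b a c * XM c b
          - cov2 (christoffel g ginv) P x a c b * XM c b) := by
    unfold Eform Mtens
    refine Finset.sum_congr rfl fun c _ => Finset.sum_congr rfl fun b _ => ?_
    rw [up2_eq g ginv P Q x h P c b, ← hXM]
    ring
  have T1 : (∑ c, ∑ b, cov2 (christoffel g ginv) P x c a b * XM c b)
      = ∑ c, (DM g ginv P c x * XM) a c := by
    refine Finset.sum_congr rfl fun c _ => ?_
    rw [Matrix.mul_apply]
    refine Finset.sum_congr rfl fun b _ => ?_
    rw [hXM, X_symm_entry g ginv P Q x h b c, ← hXM]; rfl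
  have T2 : (∑ c, ∑ b, cov2 (christoffel g ginv) P x b a c * XM c b)
      = ∑ c, (DM g ginv P c x * XM) a c := by
    rw [Finset.sum_comm]
    refine Finset.sum_congr rfl fun b _ => ?_
    rw [Matrix.mul_apply]
    exact Finset.sum_congr rfl fun c _ => rfl
  have T3 : (∑ c, ∑ b, cov2 (christoffel g ginv) P x a c b * XM c b) = 0 := by
    have e : (∑ c, ∑ b, cov2 (christoffel g ginv) P x a c b * XM c b)
        = Matrix.trace (DM g ginv P a x * XM) := by
      simp only [Matrix.trace, Matrix.diag, Matrix.mul_apply]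
      refine Finset.sum_congr rfl fun c _ => Finset.sum_congr rfl fun b _ => ?_
      rw [hXM, X_symm_entry g ginv P Q x h c b, ← hXM]; rfl
    rw [e, hXM, key_trDX g ginv P Q x h a]
  rw [step1]
  simp only [Finset.sum_add_distrib, Finset.sum_sub_distrib]
  rw [T1, T2, T3]
  ring

lemma W_eq (p : ℕ) (htr : ∀ y, (∑ b, mixUp ginv P y b b) = (p : ℝ)) (a : Fin n) :
    Wform g ginv P Q x a
      = -2 * ∑ c, (DM g ginv P c x * (TM ginv x * TM Q x * TM ginv x)) a c := by
  set YM := TM ginv x * TM Q x * TM ginv x with hYM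
  have step1 : Wform g ginv P Q x a
      = -∑ c, ∑ b, (cov2 (christoffel g ginv) P x c a b * YM c b
          + cov2 (christoffel g ginv) P x b a c * YM c b
          - cov2 (christoffel g ginv) P x a c b * YM c b) := by
    unfold Wform Mtens
    congr 1
    refine Finset.sum_congr rfl fun c _ => Finset.sum_congr rfl fun b _ => ?_
    rw [up2_eq g ginv P Q x h Q c b, ← hYM]
    ring
  have T1 : (∑ c, ∑ b, cov2 (christoffel g ginv) P x c a b * YM c b)
      = ∑ c, (DM g ginv P c x * YM) a c := by
    refine Finset.sum_congr rfl fun c _ => ?_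
    rw [Matrix.mul_apply]
    refine Finset.sum_congr rfl fun b _ => ?_
    rw [hYM, Y_symm_entry g ginv P Q x h b c, ← hYM]; rfl
  have T2 : (∑ c, ∑ b, cov2 (christoffel g ginv) P x b a c * YM c b)
      = ∑ c, (DM g ginv P c x * YM) a c := by
    rw [Finset.sum_comm]
    refine Finset.sum_congr rfl fun b _ => ?_
    rw [Matrix.mul_apply]
    exact Finset.sum_congr rfl fun c _ => rfl
  have T3 : (∑ c, ∑ b, cov2 (christoffel g ginv) P x a c b * YM c b) = 0 := by
    have e : (∑ c, ∑ b, cov2 (christoffel g ginv) P x a c b * YM c b)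
        = Matrix.trace (DM g ginv P a x * YM) := by
      simp only [Matrix.trace, Matrix.diag, Matrix.mul_apply]
      refine Finset.sum_congr rfl fun c _ => Finset.sum_congr rfl fun b _ => ?_
      rw [hYM, Y_symm_entry g ginv P Q x h c b, ← hYM]; rfl
    rw [e, hYM, key_trDY g ginv P Q x h a p htr]
  rw [step1]
  simp only [Finset.sum_add_distrib, Finset.sum_sub_distrib]
  rw [T1, T2, T3]
  ring

lemma PmGm_entry (a r : Fin n) :
    (TM P x * TM ginv x) a r = (TM ginv x * TM P x) r a := by
  obtain ⟨_, _, _, _, hGs, hPs, _⟩ := h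
  rw [TM_mul_apply, TM_mul_apply]
  exact Finset.sum_congr rfl fun c _ => by rw [hGs x r c, hPs x c a]; ring

lemma QmGm_entry (a r : Fin n) :
    (TM Q x * TM ginv x) a r = (TM ginv x * TM Q x) r a := by
  obtain ⟨_, _, _, _, hGs, _, hQs, _⟩ := h
  rw [TM_mul_apply, TM_mul_apply]
  exact Finset.sum_congr rfl fun c _ => by rw [hGs x r c, hQs x c a]; ring

lemma contract_E (a : Fin n) :
    (∑ r, mixUp ginv P x r a * Eform g ginv P x r) = 0 := by
  have step1 : (∑ r, mixUp ginv P x r a * Eform g ginv P x r)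
      = ∑ r, ∑ c, (2:ℝ) * ((TM P x * TM ginv x) a r
          * (DM g ginv P c x * (TM ginv x * TM P x * TM ginv x)) r c) := by
    refine Finset.sum_congr rfl fun r _ => ?_
    rw [E_eq g ginv P Q x h r, mixUp_eq ginv P x r a, ← PmGm_entry g ginv P Q x h a r,
      Finset.mul_sum, Finset.mul_sum]
    exact Finset.sum_congr rfl fun c _ => by ring
  rw [step1, Finset.sum_comm]
  have step2 : ∀ c, (∑ r, (2:ℝ) * ((TM P x * TM ginv x) a r
        * (DM g ginv P c x * (TM ginv x * TM P x * TM ginv x)) r c)) = 0 := by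
    intro c
    have hz : (TM P x * TM ginv x) * (DM g ginv P c x * (TM ginv x * TM P x * TM ginv x))
        = 0 := by
      rw [← mul_assoc]
      exact key_PGDX g ginv P Q x h c
    have : (∑ r, (TM P x * TM ginv x) a r
          * (DM g ginv P c x * (TM ginv x * TM P x * TM ginv x)) r c)
        = ((TM P x * TM ginv x) * (DM g ginv P c x * (TM ginv x * TM P x * TM ginv x))) a c :=
      (Matrix.mul_apply).symm
    rw [← Finset.mul_sum, this, hz]
    simp
  exact Finset.sum_eq_zero fun c _ => step2 c

lemma contract_WQ (p : ℕ) (htr : ∀ y, (∑ b, mixUp ginv P y b b) = (p : ℝ)) (a : Fin n) :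
    (∑ r, mixUp ginv Q x r a * Wform g ginv P Q x r) = 0 := by
  have step1 : (∑ r, mixUp ginv Q x r a * Wform g ginv P Q x r)
      = ∑ r, ∑ c, (-2:ℝ) * ((TM Q x * TM ginv x) a r
          * (DM g ginv P c x * (TM ginv x * TM Q x * TM ginv x)) r c) := by
    refine Finset.sum_congr rfl fun r _ => ?_
    rw [W_eq g ginv P Q x h p htr r, mixUp_eq ginv Q x r a, ← QmGm_entry g ginv P Q x h a r,
      Finset.mul_sum, Finset.mul_sum]
    exact Finset.sum_congr rfl fun c _ => by ring
  rw [step1, Finset.sum_comm]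
  have step2 : ∀ c, (∑ r, (-2:ℝ) * ((TM Q x * TM ginv x) a r
        * (DM g ginv P c x * (TM ginv x * TM Q x * TM ginv x)) r c)) = 0 := by
    intro c
    have hz : (TM Q x * TM ginv x) * (DM g ginv P c x * (TM ginv x * TM Q x * TM ginv x))
        = 0 := by
      rw [← mul_assoc]
      exact key_QGDY g ginv P Q x h c
    have : (∑ r, (TM Q x * TM ginv x) a r
          * (DM g ginv P c x * (TM ginv x * TM Q x * TM ginv x)) r c)
        = ((TM Q x * TM ginv x) * (DM g ginv P c x * (TM ginv x * TM Q x * TM ginv x))) a c :=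
      (Matrix.mul_apply).symm
    rw [← Finset.mul_sum, this, hz]
    simp
  exact Finset.sum_eq_zero fun c _ => step2 c

lemma contract_W (p : ℕ) (htr : ∀ y, (∑ b, mixUp ginv P y b b) = (p : ℝ)) (a : Fin n) :
    (∑ r, mixUp ginv P x r a * Wform g ginv P Q x r) = Wform g ginv P Q x a := by
  obtain ⟨hgc, hGc, hPc, hgs, hGs, hPs, hQs, hgG, hPQ, hPGP, hQGQ, hPGQ⟩ := h
  have hδ : ∀ r, mixUp ginv P x r a + mixUp ginv Q x r a = if a = r then (1:ℝ) else 0 := by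
    intro r
    have : mixUp ginv P x r a + mixUp ginv Q x r a = ∑ c, g x a c * ginv x c r := by
      unfold mixUp
      rw [← Finset.sum_add_distrib]
      refine Finset.sum_congr rfl fun c _ => ?_
      rw [← mul_add, hPQ x c a, hgs x c a, hGs x r c]
      ring
    rw [this, hgG x a r]
  have key : ∀ r, mixUp ginv P x r a * Wform g ginv P Q x r
      = (if a = r then (1:ℝ) else 0) * Wform g ginv P Q x r
        - mixUp ginv Q x r a * Wform g ginv P Q x r := by
    intro r
    rw [← hδ r]
    ring
  rw [Finset.sum_congr rfl fun r _ => key r, Finset.sum_sub_distrib]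
  rw [contract_WQ g ginv P Q x ⟨hgc, hGc, hPc, hgs, hGs, hPs, hQs, hgG, hPQ, hPGP, hQGQ, hPGQ⟩ p htr a]
  rw [delta_sum (fun r => Wform g ginv P Q x r) a]
  ring

lemma cov2_symm (e a b : Fin n) :
    cov2 (christoffel g ginv) P x e a b = cov2 (christoffel g ginv) P x e b a := by
  obtain ⟨_, _, _, _, _, hPs, _⟩ := h
  unfold cov2
  rw [pd_funext e (fun y => hPs y a b) x]
  have e1 : (∑ r, christoffel g ginv x r e b * P x a r)
      = ∑ r, christoffel g ginv x r e b * P x r a :=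
    Finset.sum_congr rfl fun r _ => by rw [hPs x a r]
  have e2 : (∑ r, christoffel g ginv x r e a * P x r b)
      = ∑ r, christoffel g ginv x r e a * P x b r :=
    Finset.sum_congr rfl fun r _ => by rw [hPs x r b]
  rw [e1, e2]
  ring

end AuxEW

/-- `T_{abc} = 0` is equivalent to
`∇_b P_{ac} = (1/2p)(E_aP_{bc} + E_cP_{ab}) - (1/2(n-p))(W_aΠ_{bc} + W_cΠ_{ba})`, which in
turn can be written as
`∇_b P_{ac} = P_{bc}u_a + P_{ab}u_c - P_a^r u_r g_{bc} - P_c^r u_r g_{ab}` with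
`u = E/(2p) + W/(2(n-p))`. -/
theorem stmt_15 {n : ℕ} (g ginv P Q : Ten2 n) (h : ProjectorSetup g ginv P Q)
    (p : ℕ) (hp0 : 0 < p) (hpn : p < n)
    (htr : ∀ x, (∑ a, mixUp ginv P x a a) = (p : ℝ))
    (u : Ten1 n)
    (hu : ∀ x a, u x a = Eform g ginv P x a / (2 * (p : ℝ))
        + Wform g ginv P Q x a / (2 * ((n : ℝ) - (p : ℝ)))) :
    ((∀ x a b c, Ttens (p : ℝ) g ginv P Q x a b c = 0)
      ↔ (∀ x a b c, cov2 (christoffel g ginv) P x b a c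
          = (1/(2*(p : ℝ))) * (Eform g ginv P x a * P x b c
              + Eform g ginv P x c * P x a b)
            - (1/(2*((n : ℝ) - (p : ℝ)))) * (Wform g ginv P Q x a * Q x b c
              + Wform g ginv P Q x c * Q x b a)))
    ∧ ((∀ x a b c, cov2 (christoffel g ginv) P x b a c
          = (1/(2*(p : ℝ))) * (Eform g ginv P x a * P x b c
              + Eform g ginv P x c * P x a b)
            - (1/(2*((n : ℝ) - (p : ℝ)))) * (Wform g ginv P Q x a * Q x b c
              + Wform g ginv P Q x c * Q x b a))
      ↔ (∀ x a b c, cov2 (christoffel g ginv) P x b a c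
          = P x b c * u x a + P x a b * u x c
            - (∑ r, mixUp ginv P x r a * u x r) * g x b c
            - (∑ r, mixUp ginv P x r c * u x r) * g x a b)) := by
  obtain ⟨hgc, hGc, hPc, hgs, hGs, hPs, hQs, hgG, hPQ, hPGP, hQGQ, hPGQ⟩ := h
  have h' : ProjectorSetup g ginv P Q :=
    ⟨hgc, hGc, hPc, hgs, hGs, hPs, hQs, hgG, hPQ, hPGP, hQGQ, hPGQ⟩
  have hpR : ((p:ℕ):ℝ) ≠ 0 := Nat.cast_ne_zero.mpr hp0.ne'
  have hmR : ((n:ℝ) - ((p:ℕ):ℝ)) ≠ 0 := sub_ne_zero_of_ne (Nat.cast_lt.mpr hpn).ne'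
  constructor
  · constructor
    · intro hT x a b c
      have hM : ∀ a b c, Mtens g ginv P x a b c
          = (1/(p:ℝ)) * Eform g ginv P x a * P x b c
            - (1/((n:ℝ)-(p:ℝ))) * Wform g ginv P Q x a * Q x b c := by
        intro a b c
        have ht := hT x a b c
        unfold Ttens at ht
        linarith
      have hDM : Mtens g ginv P x a b c + Mtens g ginv P x c b a
          = 2 * cov2 (christoffel g ginv) P x b a c := by
        unfold Mtens
        rw [cov2_symm g ginv P Q x h' b c a,
            cov2_symm g ginv P Q x h' a c b,
            cov2_symm g ginv P Q x h' c b a]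
        ring
      have e2 : cov2 (christoffel g ginv) P x b a c
          = (Mtens g ginv P x a b c + Mtens g ginv P x c b a) / 2 := by linarith
      rw [e2, hM a b c, hM c b a, hPs x b a]
      field_simp
      ring
    · intro hC x a b c
      unfold Ttens Mtens
      rw [hC x a b c, hC x a c b, hC x b a c,
        hPs x b a, hPs x c b, hQs x c b, hQs x c a, hQs x a b]
      field_simp
      ring
  · have hcon : ∀ x a, (∑ r, mixUp ginv P x r a * u x r)
        = Wform g ginv P Q x a / (2*((n:ℝ)-(p:ℝ))) := by
      intro x a
      have e1 : ∀ r, mixUp ginv P x r a * u x r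
          = (mixUp ginv P x r a * Eform g ginv P x r) / (2*(p:ℝ))
            + (mixUp ginv P x r a * Wform g ginv P Q x r) / (2*((n:ℝ)-(p:ℝ))) := by
        intro r; rw [hu x r]; ring
      rw [Finset.sum_congr rfl fun r _ => e1 r, Finset.sum_add_distrib,
        ← Finset.sum_div, ← Finset.sum_div, contract_E g ginv P Q x h' a,
        contract_W g ginv P Q x h' p htr a]
      field_simp
      ring
    have hRHS : ∀ x a b c,
        (1/(2*(p:ℝ))) * (Eform g ginv P x a * P x b c + Eform g ginv P x c * P x a b)
          - (1/(2*((n:ℝ)-(p:ℝ)))) * (Wform g ginv P Q x a * Q x b c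
              + Wform g ginv P Q x c * Q x b a)
        = P x b c * u x a + P x a b * u x c
          - (∑ r, mixUp ginv P x r a * u x r) * g x b c
          - (∑ r, mixUp ginv P x r c * u x r) * g x a b := by
      intro x a b c
      rw [hcon x a, hcon x c, hu x a, hu x c, ← hPQ x b c, ← hPQ x a b, hQs x b a]
      field_simp
      ring
    exact ⟨fun H x a b c => (H x a b c).trans (hRHS x a b c),
           fun H x a b c => (H x a b c).trans (hRHS x a b c).symm⟩
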